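/- arXiv:1907.03816 — 4 statements merged into one kernel-verified Lean document; each statement's English description precedes it below -/
import Mathlib

section
/- Let h be a linear separator on ℝ^d, let T ⊆ ℝ^d be a finite set, and let k ≥ 1. Suppose that every subset S' ⊆ T with |S'| = k contains a point x such that S' ∖ {x} →_h x. Then the number of points y ∈ T for which T ∖ {y} does NOT infer y under h is at most k − 1. -/
open MeasureTheory
open scoped RealInnerProductSpace ENNReal

noncomputable section

/-- `d`-dimensional Euclidean space. -/
abbrev Euc (d : ℕ) := EuclideanSpace ℝ (Fin d)

/-- A linear separator on `ℝ^d`: a function of the form `x ↦ ⟪v, x⟫ + b`. -/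
def IsLinSep {d : ℕ} (h : Euc d → ℝ) : Prop :=
  ∃ (v : Euc d) (b : ℝ), ∀ x, h x = ⟪v, x⟫ + b

/-- `h'` is query-consistent with `h` on `S`: all label queries and all
comparison queries on `S` agree. -/
def QueryConsistent {d : ℕ} (h h' : Euc d → ℝ) (S : Set (Euc d)) : Prop :=
  (∀ x ∈ S, Real.sign (h' x) = Real.sign (h x)) ∧
  (∀ x ∈ S, ∀ y ∈ S, Real.sign (h' x - h' y) = Real.sign (h x - h y))

/-- `S` infers `z` under `h` (written `S →ₕ z`): every linear separator that is
query-consistent with `h` on `S` assigns `z` the same label as `h`. -/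
def Infers {d : ℕ} (h : Euc d → ℝ) (S : Set (Euc d)) (z : Euc d) : Prop :=
  ∀ h' : Euc d → ℝ, IsLinSep h' → QueryConsistent h h' S →
    Real.sign (h' z) = Real.sign (h z)

/-- The `(c1, c2)`-conditions on a distribution `D` over `ℝ^d`:
concentration of the norm and anti-concentration of one-dimensional marginals. -/
def Conditions {d : ℕ} (D : Measure (Euc d)) (c1 c2 : ℝ) : Prop :=
  (∀ α : ℝ, 0 < α → D {x | (d : ℝ) * α < ‖x‖} ≤ ENNReal.ofReal (c1 / α)) ∧
  (∀ α : ℝ, 0 < α → ∀ v : Euc d, ‖v‖ = 1 → ∀ b : ℝ,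
      D {x | |⟪v, x⟫ + b| ≤ α} ≤ ENNReal.ofReal (c2 * α))

lemma infers_mono {d : ℕ} (h : Euc d → ℝ) {S S' : Set (Euc d)} (hSS : S ⊆ S')
    (z : Euc d) (hz : Infers h S z) : Infers h S' z := by
  intro h' hlin hqc
  exact hz h' hlin ⟨fun x hx => hqc.1 x (hSS hx),
    fun x hx y hy => hqc.2 x (hSS hx) y (hSS hy)⟩

/-- If every `k`-element subset of `T` contains an inferable point, then at
most `k - 1` points of `T` fail to be inferred from the rest of `T`. -/
theorem stmt4 (d : ℕ) (h : Euc d → ℝ) (hh : IsLinSep h) (T : Finset (Euc d))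
    (k : ℕ) (hk : 1 ≤ k)
    (H : ∀ S' : Finset (Euc d), S' ⊆ T → S'.card = k →
      ∃ x ∈ S', Infers h ((S' : Set (Euc d)) \ {x}) x) :
    {y ∈ (T : Set (Euc d)) | ¬ Infers h ((T : Set (Euc d)) \ {y}) y}.ncard ≤ k - 1 := by
  classical
  set B : Finset (Euc d) :=
    T.filter (fun y => ¬ Infers h ((T : Set (Euc d)) \ {y}) y) with hB
  have hset : {y ∈ (T : Set (Euc d)) | ¬ Infers h ((T : Set (Euc d)) \ {y}) y}
      = (B : Set (Euc d)) := by
    ext y; simp [hB]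
  rw [hset, Set.ncard_coe_finset]
  by_contra hlt
  push_neg at hlt
  have hk' : k ≤ B.card := by omega
  obtain ⟨S', hS'B, hS'card⟩ := Finset.exists_subset_card_eq hk'
  have hS'T : S' ⊆ T := hS'B.trans (Finset.filter_subset _ _)
  obtain ⟨x, hxS', hx⟩ := H S' hS'T hS'card
  have hxB := hS'B hxS'
  rw [hB, Finset.mem_filter] at hxB
  exact hxB.2 (infers_mono h (by
    intro z hz
    exact ⟨hS'T hz.1, hz.2⟩) x hx)
end
end

section
/- Inference is invariant under invertible affine transformations: let f : ℝ^d → ℝ^d be an invertible affine map, h a linear separator on ℝ^d, S ⊆ ℝ^d a finite set, and z ∈ ℝ^d. Then the composition h ∘ f is a linear separator on ℝ^d, and S →_{h∘f} z if and only if f(S) →_h f(z). -/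
open MeasureTheory
open scoped RealInnerProductSpace ENNReal

noncomputable section

/-! The separators consistent with `h ∘ f` on `S` are exactly the `h' ∘ f` with `h'` consistent
with `h` on `f(S)`, because composing with an affine bijection maps linear separators onto
linear separators. -/

theorem IsLinSep.comp_affineMap {d : ℕ} {h : Euc d → ℝ} (hh : IsLinSep h)
    (f : Euc d →ᵃ[ℝ] Euc d) : IsLinSep (h ∘ f) := by
  obtain ⟨v, b, hv⟩ := hh
  refine ⟨f.linear.adjoint v, ⟪v, f 0⟫ + b, fun x => ?_⟩
  rw [Function.comp_apply, hv, congrFun f.decomp x, Pi.add_apply, inner_add_right,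
    LinearMap.adjoint_inner_left, add_assoc]

theorem queryConsistent_image_iff {d : ℕ} (f : Euc d → Euc d) (h h' : Euc d → ℝ)
    (S : Set (Euc d)) :
    QueryConsistent h h' (f '' S) ↔ QueryConsistent (h ∘ f) (h' ∘ f) S := by
  simp only [QueryConsistent, Set.forall_mem_image, Function.comp_apply]

theorem infers_comp_affineEquiv_iff {d : ℕ} (f : Euc d ≃ᵃ[ℝ] Euc d) (h : Euc d → ℝ)
    (S : Set (Euc d)) (z : Euc d) :
    Infers (h ∘ f) S z ↔ Infers h (f '' S) (f z) := by
  constructor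
  · intro hinf h' hh' hcons
    exact hinf (h' ∘ f) (hh'.comp_affineMap f.toAffineMap)
      ((queryConsistent_image_iff f h h' S).1 hcons)
  · intro hinf h' hh' hcons
    have hcancel : h' ∘ f.symm ∘ f = h' := by
      funext x; simp
    have hcons' : QueryConsistent h (h' ∘ f.symm) (f '' S) := by
      rw [queryConsistent_image_iff, Function.comp_assoc, hcancel]
      exact hcons
    simpa using hinf (h' ∘ f.symm) (hh'.comp_affineMap f.symm.toAffineMap) hcons'

theorem stmt7_general (d : ℕ) (f : Euc d ≃ᵃ[ℝ] Euc d) (h : Euc d → ℝ) (hh : IsLinSep h)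
    (S : Set (Euc d)) (z : Euc d) :
    IsLinSep (h ∘ f) ∧ (Infers (h ∘ f) S z ↔ Infers h (⇑f '' S) (f z)) :=
  ⟨hh.comp_affineMap f.toAffineMap, infers_comp_affineEquiv_iff f h S z⟩

/-- Inference is invariant under invertible affine transformations. -/
theorem stmt7 (d : ℕ) (f : Euc d ≃ᵃ[ℝ] Euc d) (h : Euc d → ℝ) (hh : IsLinSep h)
    (S : Set (Euc d)) (hS : S.Finite) (z : Euc d) :
    IsLinSep (h ∘ f) ∧ (Infers (h ∘ f) S z ↔ Infers h (⇑f '' S) (f z)) :=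
  stmt7_general d f h hh S z
end
end

section
/- Let c1, c2 > 0 and let D be a probability distribution on ℝ^d satisfying the (c1, c2)-conditions. Let γ ∈ (0, 1], let v ∈ ℝ^d be a unit vector, and let b ∈ ℝ. Define N_{v,b} = { x ∈ ℝ^d : there exist a unit vector v' ∈ ℝ^d and b' ∈ ℝ with ‖v − v'‖ ≤ γ, |b − b'| ≤ γ, and |⟨v', x⟩ + b'| ≤ γ }. Then D(N_{v,b}) ≤ 2·c2·(γ + √γ) + c1·d·√γ. -/
open MeasureTheory
open scoped RealInnerProductSpace ENNReal

noncomputable section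

/-
A point of `N_{v,b}` is either far from the origin, `‖x‖ > 1/√γ`, or it lies in a wider strip
around the hyperplane `⟪v, ·⟫ + b = 0`: moving `(v', b')` to `(v, b)` changes `⟪v', x⟫ + b'` by at
most `‖v - v'‖ ‖x‖ + |b - b'| ≤ γ / √γ + γ`, so `|⟪v, x⟫ + b| ≤ 2γ + √γ`. The anti-concentration
condition bounds the strip by `c2 (2γ + √γ)` and the norm condition, at `α = 1 / (d √γ)`, bounds
the far region by `c1 d √γ`.
-/

theorem abs_inner_add_le_abs_inner_add_add {E : Type*} [NormedAddCommGroup E]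
    [InnerProductSpace ℝ E] (v v' x : E) (b b' : ℝ) :
    |⟪v, x⟫ + b| ≤ |⟪v', x⟫ + b'| + ‖v - v'‖ * ‖x‖ + |b - b'| := by
  have hsplit : ⟪v, x⟫ + b = (⟪v', x⟫ + b') + ⟪v - v', x⟫ + (b - b') := by
    rw [inner_sub_left]; ring
  calc |⟪v, x⟫ + b| ≤ |⟪v', x⟫ + b'| + |⟪v - v', x⟫| + |b - b'| := by
        rw [hsplit]; exact abs_add_three _ _ _
    _ ≤ |⟪v', x⟫ + b'| + ‖v - v'‖ * ‖x‖ + |b - b'| := by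
        gcongr; exact abs_real_inner_le_norm _ _

theorem setOf_near_strips_subset {E : Type*} [NormedAddCommGroup E] [InnerProductSpace ℝ E]
    {γ : ℝ} (hγ : 0 ≤ γ) (R : ℝ) (v : E) (b : ℝ) :
    {x | ∃ v' : E, ‖v'‖ = 1 ∧ ∃ b' : ℝ, ‖v - v'‖ ≤ γ ∧ |b - b'| ≤ γ ∧ |⟪v', x⟫ + b'| ≤ γ}
      ⊆ {x | |⟪v, x⟫ + b| ≤ 2 * γ + γ * R} ∪ {x | R < ‖x‖} := by
  rintro x ⟨v', -, b', hvv', hbb', hx⟩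
  rcases lt_or_ge R ‖x‖ with hfar | hnear
  · exact Or.inr hfar
  · left
    calc |⟪v, x⟫ + b| ≤ |⟪v', x⟫ + b'| + ‖v - v'‖ * ‖x‖ + |b - b'| :=
          abs_inner_add_le_abs_inner_add_add v v' x b b'
      _ ≤ γ + γ * R + γ := by gcongr
      _ = 2 * γ + γ * R := by ring

theorem Conditions.measure_norm_gt_le {d : ℕ} {D : Measure (Euc d)} {c1 c2 : ℝ}
    (hD : Conditions D c1 c2) {R : ℝ} (hR : 0 < R) :
    D {x | R < ‖x‖} ≤ ENNReal.ofReal (c1 * d / R) := by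
  rcases Nat.eq_zero_or_pos d with rfl | hd
  · have hempty : {x : Euc 0 | R < ‖x‖} = ∅ := by
      ext x
      simp [Subsingleton.elim x 0, hR.not_gt]
    simp [hempty]
  · have hd' : (0 : ℝ) < d := Nat.cast_pos.2 hd
    have h := hD.1 (R / d) (by positivity)
    rwa [mul_div_cancel₀ R hd'.ne', div_div_eq_mul_div] at h

/-- The measure of the `γ`-net element `N_{v,b}` (union of `γ`-strips near the
hyperplane `⟪v,·⟫ + b`) is at most `2 c2 (γ + √γ) + c1 d √γ`. -/
theorem stmt9 (d : ℕ) (c1 c2 : ℝ) (hc1 : 0 < c1) (hc2 : 0 < c2)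
    (D : Measure (Euc d)) [IsProbabilityMeasure D] (hD : Conditions D c1 c2)
    (γ : ℝ) (hγ : γ ∈ Set.Ioc (0 : ℝ) 1) (v : Euc d) (hv : ‖v‖ = 1) (b : ℝ) :
    D {x | ∃ v' : Euc d, ‖v'‖ = 1 ∧ ∃ b' : ℝ,
        ‖v - v'‖ ≤ γ ∧ |b - b'| ≤ γ ∧ |⟪v', x⟫ + b'| ≤ γ}
      ≤ ENNReal.ofReal (2 * c2 * (γ + Real.sqrt γ) + c1 * d * Real.sqrt γ) := by
  obtain ⟨hγ0, -⟩ := hγ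
  have hs : 0 < Real.sqrt γ := Real.sqrt_pos.2 hγ0
  calc _ ≤ D ({x | |⟪v, x⟫ + b| ≤ 2 * γ + γ * (Real.sqrt γ)⁻¹} ∪
          {x | (Real.sqrt γ)⁻¹ < ‖x‖}) :=
        measure_mono (setOf_near_strips_subset hγ0.le _ v b)
    _ ≤ D {x | |⟪v, x⟫ + b| ≤ 2 * γ + γ * (Real.sqrt γ)⁻¹} + D {x | (Real.sqrt γ)⁻¹ < ‖x‖} :=
        measure_union_le _ _
    _ ≤ ENNReal.ofReal (c2 * (2 * γ + γ * (Real.sqrt γ)⁻¹)) +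
          ENNReal.ofReal (c1 * d / (Real.sqrt γ)⁻¹) :=
        add_le_add (hD.2 _ (by positivity) v hv b) (hD.measure_norm_gt_le (by positivity))
    _ = ENNReal.ofReal (c2 * (2 * γ + Real.sqrt γ) + c1 * d * Real.sqrt γ) := by
        rw [← div_eq_mul_inv, Real.div_sqrt, div_inv_eq_mul,
          ← ENNReal.ofReal_add (by positivity) (by positivity)]
    _ ≤ _ := ENNReal.ofReal_le_ofReal (by nlinarith)
end
end

section
/- Let D be a probability distribution on ℝ^d and ε ∈ (0, 1/2). For a finite tuple S of points in ℝ^d, let V(S) = D(ConvexHull(S)) denote the D-measure of the convex hull of the points of S. Let n ≥ 1, set k = ⌈log₂(1/ε)⌉ and m = ⌊n/k⌋, and assume m ≥ 1. If E_{S ∼ D^n}[V(S)] ≤ 1 − 2ε, then Pr_{S ∼ D^m}[V(S) < 1 − ε] ≥ 1/2. -/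
open MeasureTheory
open scoped RealInnerProductSpace ENNReal

noncomputable section

section Aux
open Set

lemma mem_hull_iff' {d m : ℕ} (ω : Fin m → Euc d) (x : Euc d) :
    x ∈ convexHull ℝ (Set.range ω) ↔
      ∃ w ∈ stdSimplex ℝ (Fin m), ∑ j, w j • ω j = x := by
  classical
  constructor
  · intro hx
    rw [convexHull_range_eq_exists_affineCombination] at hx
    obtain ⟨s, w, h0, h1, hx⟩ := hx
    refine ⟨fun i => if i ∈ s then w i else 0, ⟨fun i => ?_, ?_⟩, ?_⟩
    · by_cases hi : i ∈ s <;> simp [hi]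
      exact h0 _ hi
    · simp only [Finset.sum_ite_mem, Finset.univ_inter]; exact h1
    · rw [← hx, Finset.affineCombination_eq_linear_combination s ω w h1]
      simp only [ite_smul, zero_smul, Finset.sum_ite_mem, Finset.univ_inter]
  · rintro ⟨w, ⟨h0, h1⟩, hx⟩
    exact mem_convexHull_of_exists_fintype w ω h0 h1 (fun i => mem_range_self i) hx

lemma closed_hull_graph' (d m : ℕ) :
    IsClosed {p : (Fin m → Euc d) × Euc d | p.2 ∈ convexHull ℝ (Set.range p.1)} := by
  have hset : {p : (Fin m → Euc d) × Euc d | p.2 ∈ convexHull ℝ (Set.range p.1)} =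
      Prod.snd '' {q : (stdSimplex ℝ (Fin m)) × ((Fin m → Euc d) × Euc d) |
        q.2.2 = ∑ j, (q.1 : Fin m → ℝ) j • q.2.1 j} := by
    ext ⟨ω, x⟩
    simp only [mem_setOf_eq, mem_image, Prod.exists, mem_hull_iff']
    constructor
    · rintro ⟨w, hw, hx⟩; exact ⟨⟨w, hw⟩, ω, x, hx.symm, rfl⟩
    · rintro ⟨w, ω', x', hx, h⟩
      obtain ⟨h1, h2⟩ := Prod.mk.injEq .. ▸ h
      subst h1; subst h2
      exact ⟨w, w.2, hx.symm⟩
  rw [hset]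
  haveI : CompactSpace (stdSimplex ℝ (Fin m)) :=
    isCompact_iff_compactSpace.mp (isCompact_stdSimplex _ _)
  apply isClosedMap_snd_of_compactSpace
  apply isClosed_eq
  · exact continuous_snd.comp continuous_snd
  · refine continuous_finset_sum _ fun j _ => Continuous.fun_smul ?_ ?_
    · exact (continuous_apply j).comp (continuous_subtype_val.comp continuous_fst)
    · exact (continuous_apply j).comp (continuous_fst.comp continuous_snd)

lemma meas_V' {d m : ℕ} (D : Measure (Euc d)) [SFinite D] :
    Measurable fun ω : Fin m → Euc d => D (convexHull ℝ (Set.range ω)) :=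
  measurable_measure_prodMk_left (ν := D) (closed_hull_graph' d m).measurableSet

lemma pi_iInter_blocks' {E : Type*} [MeasurableSpace E] (D : Measure E) [IsProbabilityMeasure D]
    (m : ℕ) (A : Set (Fin m → E)) (hA : MeasurableSet A) :
    ∀ (k : ℕ) (ι : Type) (_ : Fintype ι) (e : Fin k → Fin m → ι)
      (_ : Function.Injective fun p : Fin k × Fin m => e p.1 p.2),
      (Measure.pi fun _ : ι => D) (⋂ i, (fun ω => ω ∘ e i) ⁻¹' A)
        = ((Measure.pi fun _ : Fin m => D) A) ^ k := by
  intro k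
  induction k with
  | zero =>
    intro ι _ e he
    simp [Set.iInter_of_empty]
  | succ k IH =>
    intro ι _ e he
    classical
    set b : Fin m → ι := e (Fin.last k) with hb_def
    set p : ι → Prop := fun x => ∃ j, b j = x with hp_def
    have hb_inj : Function.Injective b := by
      intro j j' h
      have := he (a₁ := (Fin.last k, j)) (a₂ := (Fin.last k, j')) h
      exact (Prod.mk.injEq .. ▸ this).2
    have hnp : ∀ (i : Fin k) (j : Fin m), ¬ p (e i.castSucc j) := by
      rintro i j ⟨j', hj'⟩
      have := he (a₁ := (Fin.last k, j')) (a₂ := (i.castSucc, j)) hj'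
      have h1 : Fin.last k = i.castSucc := (Prod.mk.injEq .. ▸ this).1
      exact absurd h1.symm (Fin.castSucc_lt_last i).ne
    set e'' : Fin k → Fin m → {x : ι // ¬ p x} :=
      fun i j => ⟨e i.castSucc j, hnp i j⟩ with he''_def
    have he''_inj : Function.Injective fun q : Fin k × Fin m => e'' q.1 q.2 := by
      rintro ⟨i, j⟩ ⟨i', j'⟩ h
      have h2 : e i.castSucc j = e i'.castSucc j' := congrArg Subtype.val h
      have := he (a₁ := (i.castSucc, j)) (a₂ := (i'.castSucc, j')) h2
      obtain ⟨h3, h4⟩ := Prod.mk.injEq .. ▸ this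
      exact Prod.ext (Fin.castSucc_injective _ h3) h4
    set b' : Fin m → {x : ι // p x} := fun j => ⟨b j, j, rfl⟩ with hb'_def
    have hb'_bij : Function.Bijective b' := by
      constructor
      · intro j j' h
        exact hb_inj (congrArg Subtype.val h)
      · rintro ⟨x, j, rfl⟩
        exact ⟨j, rfl⟩
    set beq : Fin m ≃ {x : ι // p x} := Equiv.ofBijective b' hb'_bij with hbeq_def
    set S₁ : Set ({x : ι // p x} → E) := (fun g => g ∘ b') ⁻¹' A with hS₁_def
    set S₂ : Set ({x : ι // ¬ p x} → E) := ⋂ i, (fun g => g ∘ e'' i) ⁻¹' A with hS₂_def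
    have hmeas_comp : ∀ {κ : Type} [Fintype κ] (f : Fin m → κ),
        Measurable fun g : κ → E => g ∘ f := by
      intro κ _ f
      exact measurable_pi_lambda _ fun j => measurable_pi_apply (f j)
    have hS₁m : MeasurableSet S₁ := (hmeas_comp b') hA
    have hS₂m : MeasurableSet S₂ :=
      MeasurableSet.iInter fun i => (hmeas_comp (e'' i)) hA
    have hφ := measurePreserving_piEquivPiSubtypeProd (fun _ : ι => D) p
    have hset : (⋂ i, (fun ω : ι → E => ω ∘ e i) ⁻¹' A)
        = (MeasurableEquiv.piEquivPiSubtypeProd (fun _ : ι => E) p) ⁻¹' (S₁ ×ˢ S₂) := by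
      ext ω
      simp only [Set.mem_iInter, Set.mem_preimage, MeasurableEquiv.piEquivPiSubtypeProd,
        Equiv.piEquivPiSubtypeProd, MeasurableEquiv.coe_mk, Equiv.coe_fn_mk,
        Set.mem_prod, hS₁_def, hS₂_def, Set.mem_iInter]
      rw [Fin.forall_fin_succ']
      constructor
      · rintro ⟨h1, h2⟩
        exact ⟨h2, h1⟩
      · rintro ⟨h1, h2⟩
        exact ⟨h2, h1⟩
    have key : (Measure.pi fun _ : ι => D) (⋂ i, (fun ω => ω ∘ e i) ⁻¹' A)
        = ((Measure.pi fun _ : {x : ι // p x} => D) S₁)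
          * ((Measure.pi fun _ : {x : ι // ¬ p x} => D) S₂) := by
      rw [hset, hφ.measure_preimage (hS₁m.prod hS₂m).nullMeasurableSet,
        Measure.prod_prod]
    have hS₁val : (Measure.pi fun _ : {x : ι // p x} => D) S₁
        = (Measure.pi fun _ : Fin m => D) A := by
      have hmp := measurePreserving_piCongrLeft (fun _ : {x : ι // p x} => D) beq
      have hsymm := hmp.symm (MeasurableEquiv.piCongrLeft (fun _ => E) beq)
      have : S₁ = (MeasurableEquiv.piCongrLeft (fun _ : {x : ι // p x} => E) beq).symm ⁻¹' A := by
        ext g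
        simp only [Set.mem_preimage, hS₁_def]
        have : (MeasurableEquiv.piCongrLeft (fun _ : {x : ι // p x} => E) beq).symm g
            = g ∘ b' := by
          funext j
          simp [MeasurableEquiv.piCongrLeft, Equiv.piCongrLeft, hbeq_def]
        rw [this]
      rw [this, hsymm.measure_preimage hA.nullMeasurableSet]
    rw [key, hS₁val, IH _ _ e'' he''_inj, pow_succ, mul_comm]

end Aux

/-- If the expected convex-hull mass of an `n`-sample is at most `1 - 2ε`, then
an `⌊n/⌈log₂(1/ε)⌉⌋`-sample has hull mass below `1 - ε` with probability at
least `1/2`. -/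
theorem stmt12 (d : ℕ) (D : Measure (Euc d)) [IsProbabilityMeasure D]
    (ε : ℝ) (hε : ε ∈ Set.Ioo (0 : ℝ) (1/2)) (n : ℕ) (hn : 1 ≤ n)
    (k m : ℕ) (hk : k = ⌈Real.logb 2 (1 / ε)⌉₊) (hm : m = n / k) (hm1 : 1 ≤ m)
    (H : ∫⁻ ω, D (convexHull ℝ (Set.range ω))
          ∂(Measure.pi fun _ : Fin n => D) ≤ ENNReal.ofReal (1 - 2 * ε)) :
    ENNReal.ofReal (1/2) ≤
      (Measure.pi fun _ : Fin m => D)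
        {ω | D (convexHull ℝ (Set.range ω)) < ENNReal.ofReal (1 - ε)} := by
  obtain ⟨hε0, hε2⟩ := hε
  have hε1 : ε < 1 := by linarith
  by_contra hcon
  rw [not_le] at hcon
  set μm := Measure.pi fun _ : Fin m => D with hμm
  set μn := Measure.pi fun _ : Fin n => D with hμn
  -- basic numeric facts
  have hk1 : 1 ≤ k := by
    rw [hk]
    rw [Nat.one_le_ceil_iff]
    exact Real.logb_pos one_lt_two (by rw [lt_div_iff₀ hε0]; linarith)
  have hm0 : 0 < m := hm1
  have hkm : k * m ≤ n := by
    rw [hm, mul_comm]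
    exact Nat.div_mul_le_self n k
  -- the block embeddings
  have hbound : ∀ (i : Fin k) (j : Fin m), m * (i : ℕ) + (j : ℕ) < n := by
    intro i j
    have h1 : m * (i : ℕ) + (j : ℕ) < m * ((i : ℕ) + 1) := by
      rw [Nat.mul_succ]; exact Nat.add_lt_add_left j.isLt _
    have h2 : m * ((i : ℕ) + 1) ≤ m * k := Nat.mul_le_mul_left m i.isLt
    calc m * (i : ℕ) + (j : ℕ) < m * ((i : ℕ) + 1) := h1
      _ ≤ m * k := h2
      _ = k * m := mul_comm _ _
      _ ≤ n := hkm
  set e : Fin k → Fin m → Fin n := fun i j => ⟨m * (i : ℕ) + (j : ℕ), hbound i j⟩ with he_def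
  have he_inj : Function.Injective fun p : Fin k × Fin m => e p.1 p.2 := by
    rintro ⟨i, j⟩ ⟨i', j'⟩ h
    have hval : m * (i : ℕ) + (j : ℕ) = m * (i' : ℕ) + (j' : ℕ) := congrArg Fin.val h
    have hj : (j : ℕ) = (j' : ℕ) := by
      have h1 := congrArg (· % m) hval
      simpa [Nat.mul_add_mod, Nat.mod_eq_of_lt j.isLt, Nat.mod_eq_of_lt j'.isLt] using h1
    have hi : (i : ℕ) = (i' : ℕ) := by
      have h2 : m * (i : ℕ) = m * (i' : ℕ) := by omega
      exact Nat.eq_of_mul_eq_mul_left hm0 h2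
    exact Prod.ext (Fin.ext hi) (Fin.ext hj)
  -- the good event for m-samples
  set A : Set (Fin m → Euc d) :=
    {ω | ENNReal.ofReal (1 - ε) ≤ D (convexHull ℝ (Set.range ω))} with hA_def
  have hA : MeasurableSet A := (meas_V' D) measurableSet_Ici
  have hAc : {ω : Fin m → Euc d |
      D (convexHull ℝ (Set.range ω)) < ENNReal.ofReal (1 - ε)} = Aᶜ := by
    ext ω; simp [hA_def, not_le]
  rw [hAc] at hcon
  set q : ℝ≥0∞ := μm Aᶜ with hq_def
  -- the union of block events
  set U : Set (Fin n → Euc d) := ⋃ i, (fun ω => ω ∘ e i) ⁻¹' A with hU_def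
  have hmeas_comp : ∀ i : Fin k, Measurable fun ω : Fin n → Euc d => ω ∘ e i := fun i =>
    measurable_pi_lambda _ fun j => measurable_pi_apply (e i j)
  have hUm : MeasurableSet U := MeasurableSet.iUnion fun i => (hmeas_comp i) hA
  have hUc : Uᶜ = ⋂ i, (fun ω : Fin n → Euc d => ω ∘ e i) ⁻¹' Aᶜ := by
    rw [hU_def, Set.compl_iUnion]
    simp [Set.preimage_compl]
  have hUcval : μn Uᶜ = q ^ k := by
    rw [hUc, hμn]
    exact pi_iInter_blocks' D m Aᶜ hA.compl k (Fin n) inferInstance e he_inj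
  have hUval : μn U = 1 - q ^ k := by
    have h1 := measure_compl (μ := μn) hUm.compl (measure_ne_top _ _)
    rw [compl_compl, measure_univ, hUcval] at h1
    exact h1
  -- numeric: q ^ k ≤ ofReal ε
  have hhalf : ((1:ℝ)/2) ^ k ≤ ε := by
    have hlogb : Real.logb 2 (1/ε) ≤ (k : ℝ) := by
      rw [hk]; exact Nat.le_ceil _
    have h2k : (1:ℝ)/ε ≤ (2:ℝ) ^ (k : ℝ) := by
      have := Real.rpow_le_rpow_left_iff (x := (2:ℝ)) (y := Real.logb 2 (1/ε))
        (z := (k:ℝ)) one_lt_two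
      have h3 := this.mpr hlogb
      rwa [Real.rpow_logb two_pos (by norm_num) (by positivity)] at h3
    rw [Real.rpow_natCast] at h2k
    rw [div_pow, one_pow, div_le_iff₀ (by positivity)]
    rw [div_le_iff₀ hε0] at h2k
    linarith [h2k]
  have hqk : q ^ k ≤ ENNReal.ofReal ε := by
    have hq2 : q ≤ ENNReal.ofReal (1/2) := le_of_lt hcon
    calc q ^ k ≤ (ENNReal.ofReal (1/2)) ^ k := pow_le_pow_left' hq2 k
      _ = ENNReal.ofReal (((1:ℝ)/2) ^ k) := by
          rw [← ENNReal.ofReal_pow (by norm_num)]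
      _ ≤ ENNReal.ofReal ε := ENNReal.ofReal_le_ofReal hhalf
  have hUge : ENNReal.ofReal (1 - ε) ≤ μn U := by
    rw [hUval]
    have h1 : ENNReal.ofReal (1 - ε) = 1 - ENNReal.ofReal ε := by
      rw [ENNReal.ofReal_sub _ (le_of_lt hε0), ENNReal.ofReal_one]
    rw [h1]
    exact tsub_le_tsub_left hqk 1
  -- pointwise bound
  have hpt : ∀ ω : Fin n → Euc d,
      U.indicator (fun _ => ENNReal.ofReal (1 - ε)) ω
        ≤ D (convexHull ℝ (Set.range ω)) := by
    intro ω
    by_cases hω : ω ∈ U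
    · rw [Set.indicator_of_mem hω]
      obtain ⟨i, hi⟩ := Set.mem_iUnion.mp hω
      calc ENNReal.ofReal (1 - ε) ≤ D (convexHull ℝ (Set.range (ω ∘ e i))) := hi
        _ ≤ D (convexHull ℝ (Set.range ω)) :=
          measure_mono (convexHull_mono (Set.range_comp_subset_range (e i) ω))
    · rw [Set.indicator_of_notMem hω]
      exact zero_le
  -- the contradiction
  have hchain : ENNReal.ofReal (1 - 2*ε) < ENNReal.ofReal (1 - 2*ε) := by
    calc ENNReal.ofReal (1 - 2*ε)
        < ENNReal.ofReal ((1 - ε) * (1 - ε)) := by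
          rw [ENNReal.ofReal_lt_ofReal_iff (by nlinarith)]
          nlinarith
      _ = ENNReal.ofReal (1 - ε) * ENNReal.ofReal (1 - ε) := by
          rw [ENNReal.ofReal_mul (by linarith)]
      _ ≤ ENNReal.ofReal (1 - ε) * μn U := by
          exact mul_le_mul_right hUge _
      _ = ∫⁻ ω, U.indicator (fun _ => ENNReal.ofReal (1 - ε)) ω ∂μn := by
          rw [lintegral_indicator_const hUm]
      _ ≤ ∫⁻ ω, D (convexHull ℝ (Set.range ω)) ∂μn := lintegral_mono hpt
      _ ≤ ENNReal.ofReal (1 - 2*ε) := H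
  exact absurd hchain (lt_irrefl _)
end
end
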